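/- arXiv:2205.07924 — 5 statements merged into one kernel-verified Lean document; each statement's English description precedes it below -/
import Mathlib

section
/- Let n ≥ 1, L ≥ 1 be natural numbers and β > 0 a real number. Let A and B be Hermitian n × n complex matrices, and suppose every eigenvalue λ of the Hermitian matrix D = A − B satisfies |λ| ≤ K for some real K ≥ 0. Then |f(A) − f(B)| ≤ K / L, where f(X) = −(1/(L·β))·log(Tr(exp(−β·X))). -/
open Matrix

variable {n : ℕ}

lemma conj_diag_entry (W : Matrix (Fin n) (Fin n) ℂ) (d : Fin n → ℂ) (i : Fin n) :
    (star W * Matrix.diagonal d * W) i i = ∑ j, d j * (Complex.normSq (W j i) : ℂ) := by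
  rw [Matrix.mul_apply]
  refine Finset.sum_congr rfl fun j _ => ?_
  rw [Matrix.mul_diagonal, Matrix.star_apply, mul_comm _ (d j), mul_assoc,
    RCLike.star_def, ← Complex.normSq_eq_conj_mul_self]

lemma col_norm {W : Matrix (Fin n) (Fin n) ℂ} (hW : star W * W = 1) (i : Fin n) :
    ∑ j, Complex.normSq (W j i) = 1 := by
  have h := conj_diag_entry W (fun _ => (1:ℂ)) i
  rw [Matrix.diagonal_one, mul_one, hW] at h
  simp only [one_mul, Matrix.one_apply_eq] at h
  rw [← Complex.ofReal_sum] at h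
  exact_mod_cast h.symm

lemma exp_hermitian {H : Matrix (Fin n) (Fin n) ℂ} (hH : H.IsHermitian) :
    NormedSpace.exp H = (hH.eigenvectorUnitary : Matrix (Fin n) (Fin n) ℂ) *
      Matrix.diagonal (fun i => Complex.exp (hH.eigenvalues i)) *
      star (hH.eigenvectorUnitary : Matrix (Fin n) (Fin n) ℂ) := by
  set U := (hH.eigenvectorUnitary : Matrix (Fin n) (Fin n) ℂ) with hUdef
  have hUU : U * star U = 1 := Matrix.mem_unitaryGroup_iff.mp hH.eigenvectorUnitary.2
  have hinv : U⁻¹ = star U := Matrix.inv_eq_right_inv hUU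
  have hunit : IsUnit U := ⟨⟨U, star U, hUU, mul_eq_one_comm.mp hUU⟩, rfl⟩
  calc NormedSpace.exp H
      = NormedSpace.exp (U * Matrix.diagonal (RCLike.ofReal ∘ hH.eigenvalues) * U⁻¹) := by
        refine congrArg _ ?_
        rw [hinv]
        exact hH.spectral_theorem
    _ = U * NormedSpace.exp (Matrix.diagonal (RCLike.ofReal ∘ hH.eigenvalues)) * U⁻¹ :=
        Matrix.exp_conj _ _ hunit
    _ = U * Matrix.diagonal (fun i => Complex.exp (hH.eigenvalues i)) * star U := by
        rw [hinv, Matrix.exp_diagonal]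
        congr 2
        funext j
        rw [Pi.exp_def]
        simp [← Complex.exp_eq_exp_ℂ, Function.comp]

lemma star_conj_eq (U V M : Matrix (Fin n) (Fin n) ℂ) (d : Fin n → ℂ)
    (hM : M = U * Matrix.diagonal d * star U) :
    star V * M * V = star (star U * V) * Matrix.diagonal d * (star U * V) := by
  rw [hM, StarMul.star_mul, star_star]
  noncomm_ring

lemma W_unitary {U V : Matrix (Fin n) (Fin n) ℂ} (hUU : U * star U = 1)
    (hV : star V * V = 1) : star (star U * V) * (star U * V) = 1 := by
  rw [StarMul.star_mul, star_star]
  calc star V * U * (star U * V) = star V * ((U * star U) * V) := by noncomm_ring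
    _ = 1 := by rw [hUU, one_mul, hV]

/-- quadratic form of H in re, via eigenvalues -/
lemma conj_entry_re {H : Matrix (Fin n) (Fin n) ℂ} (hH : H.IsHermitian)
    (V : Matrix (Fin n) (Fin n) ℂ) (i : Fin n) :
    ((star V * H * V) i i).re = ∑ j, hH.eigenvalues j *
      Complex.normSq ((star (hH.eigenvectorUnitary : Matrix (Fin n) (Fin n) ℂ) * V) j i) := by
  rw [star_conj_eq (hH.eigenvectorUnitary : Matrix (Fin n) (Fin n) ℂ) V H _
    hH.spectral_theorem, conj_diag_entry]
  rw [show ∑ j, (RCLike.ofReal ∘ hH.eigenvalues) j *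
      (Complex.normSq ((star (hH.eigenvectorUnitary : Matrix (Fin n) (Fin n) ℂ) * V) j i) : ℂ) =
      ((∑ j, hH.eigenvalues j *
      Complex.normSq ((star (hH.eigenvectorUnitary : Matrix (Fin n) (Fin n) ℂ) * V) j i) : ℝ) : ℂ)
    by push_cast; rfl]
  rw [Complex.ofReal_re]

lemma exp_conj_entry_re {H : Matrix (Fin n) (Fin n) ℂ} (hH : H.IsHermitian)
    (V : Matrix (Fin n) (Fin n) ℂ) (i : Fin n) :
    ((star V * NormedSpace.exp H * V) i i).re = ∑ j, Real.exp (hH.eigenvalues j) *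
      Complex.normSq ((star (hH.eigenvectorUnitary : Matrix (Fin n) (Fin n) ℂ) * V) j i) := by
  rw [star_conj_eq (hH.eigenvectorUnitary : Matrix (Fin n) (Fin n) ℂ) V _ _
    (exp_hermitian hH), conj_diag_entry]
  rw [show ∑ j, Complex.exp (hH.eigenvalues j) *
      (Complex.normSq ((star (hH.eigenvectorUnitary : Matrix (Fin n) (Fin n) ℂ) * V) j i) : ℂ) =
      ((∑ j, Real.exp (hH.eigenvalues j) *
      Complex.normSq ((star (hH.eigenvectorUnitary : Matrix (Fin n) (Fin n) ℂ) * V) j i) : ℝ) : ℂ)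
    by push_cast [Complex.ofReal_exp]; rfl]
  rw [Complex.ofReal_re]

lemma peierls {H : Matrix (Fin n) (Fin n) ℂ} (hH : H.IsHermitian)
    {V : Matrix (Fin n) (Fin n) ℂ} (hV : star V * V = 1) (i : Fin n) :
    Real.exp (((star V * H * V) i i).re) ≤ ((star V * NormedSpace.exp H * V) i i).re := by
  rw [conj_entry_re hH V i, exp_conj_entry_re hH V i]
  set W := star (hH.eigenvectorUnitary : Matrix (Fin n) (Fin n) ℂ) * V with hWdef
  have hUU : (hH.eigenvectorUnitary : Matrix (Fin n) (Fin n) ℂ) *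
      star (hH.eigenvectorUnitary : Matrix (Fin n) (Fin n) ℂ) = 1 :=
    Matrix.mem_unitaryGroup_iff.mp hH.eigenvectorUnitary.2
  have hW : star W * W = 1 := W_unitary hUU hV
  have hsum : ∑ j, Complex.normSq (W j i) = 1 := col_norm hW i
  have := convexOn_exp.map_sum_le (t := Finset.univ)
    (w := fun j => Complex.normSq (W j i)) (p := fun j => hH.eigenvalues j)
    (fun j _ => Complex.normSq_nonneg _) hsum (fun j _ => Set.mem_univ _)
  simp only [smul_eq_mul] at this
  calc Real.exp (∑ j, hH.eigenvalues j * Complex.normSq (W j i))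
      = Real.exp (∑ j, Complex.normSq (W j i) * hH.eigenvalues j) := by
        congr 1; exact Finset.sum_congr rfl fun j _ => mul_comm _ _
    _ ≤ ∑ j, Complex.normSq (W j i) * Real.exp (hH.eigenvalues j) := this
    _ = ∑ j, Real.exp (hH.eigenvalues j) * Complex.normSq (W j i) := by
        exact Finset.sum_congr rfl fun j _ => mul_comm _ _

lemma quad_bound {D : Matrix (Fin n) (Fin n) ℂ} (hD : D.IsHermitian) {K : ℝ}
    (hK : ∀ i, |hD.eigenvalues i| ≤ K)
    {V : Matrix (Fin n) (Fin n) ℂ} (hV : star V * V = 1) (i : Fin n) :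
    |((star V * D * V) i i).re| ≤ K := by
  rw [conj_entry_re hD V i]
  set W := star (hD.eigenvectorUnitary : Matrix (Fin n) (Fin n) ℂ) * V with hWdef
  have hUU : (hD.eigenvectorUnitary : Matrix (Fin n) (Fin n) ℂ) *
      star (hD.eigenvectorUnitary : Matrix (Fin n) (Fin n) ℂ) = 1 :=
    Matrix.mem_unitaryGroup_iff.mp hD.eigenvectorUnitary.2
  have hsum : ∑ j, Complex.normSq (W j i) = 1 := col_norm (W_unitary hUU hV) i
  calc |∑ j, hD.eigenvalues j * Complex.normSq (W j i)|
      ≤ ∑ j, |hD.eigenvalues j * Complex.normSq (W j i)| := Finset.abs_sum_le_sum_abs _ _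
    _ ≤ ∑ j, K * Complex.normSq (W j i) := by
        refine Finset.sum_le_sum fun j _ => ?_
        rw [abs_mul, abs_of_nonneg (Complex.normSq_nonneg _)]
        exact mul_le_mul_of_nonneg_right (hK j) (Complex.normSq_nonneg _)
    _ = K := by rw [← Finset.mul_sum, hsum, mul_one]

lemma trace_exp_re {H : Matrix (Fin n) (Fin n) ℂ} (hH : H.IsHermitian) :
    ((NormedSpace.exp H).trace).re = ∑ i, Real.exp (hH.eigenvalues i) := by
  rw [exp_hermitian hH, Matrix.trace_mul_cycle]
  have hUU : star (hH.eigenvectorUnitary : Matrix (Fin n) (Fin n) ℂ) *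
      (hH.eigenvectorUnitary : Matrix (Fin n) (Fin n) ℂ) = 1 :=
    Matrix.mem_unitaryGroup_iff'.mp hH.eigenvectorUnitary.2
  rw [hUU, Matrix.one_mul, Matrix.trace_diagonal]
  rw [Complex.re_sum]
  exact Finset.sum_congr rfl fun j _ => by
    rw [← Complex.ofReal_exp, Complex.ofReal_re]

lemma trace_conj_sum {M V : Matrix (Fin n) (Fin n) ℂ} (hV : star V * V = 1) :
    M.trace.re = ∑ i, ((star V * M * V) i i).re := by
  have hVV : V * star V = 1 := mul_eq_one_comm.mp hV
  have : M.trace = (star V * M * V).trace := by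
    rw [Matrix.trace_mul_cycle, hVV, Matrix.one_mul]
  rw [this, Matrix.trace, Complex.re_sum]
  rfl

lemma trace_exp_le {H D : Matrix (Fin n) (Fin n) ℂ} (hH : H.IsHermitian)
    (hHD : (H + D).IsHermitian) {c : ℝ}
    (hq : ∀ (V : Matrix (Fin n) (Fin n) ℂ), star V * V = 1 →
      ∀ i, |((star V * D * V) i i).re| ≤ c) :
    ((NormedSpace.exp H).trace).re ≤ Real.exp c * ((NormedSpace.exp (H + D)).trace).re := by
  set V := (hH.eigenvectorUnitary : Matrix (Fin n) (Fin n) ℂ) with hVdef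
  have hV : star V * V = 1 := Matrix.mem_unitaryGroup_iff'.mp hH.eigenvectorUnitary.2
  have hdiag : star V * H * V = Matrix.diagonal (RCLike.ofReal ∘ hH.eigenvalues) :=
    (Unitary.conjStarAlgAut_star_apply (S := ℂ) _ _).symm.trans
      hH.conjStarAlgAut_star_eigenvectorUnitary
  have key : ∀ i, Real.exp (hH.eigenvalues i - c) ≤
      ((star V * NormedSpace.exp (H + D) * V) i i).re := by
    intro i
    refine le_trans ?_ (peierls hHD hV i)
    rw [Real.exp_le_exp]
    have hsplit : star V * (H + D) * V = star V * H * V + star V * D * V := by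
      noncomm_ring
    rw [hsplit]
    have : ((star V * H * V + star V * D * V) i i).re
        = hH.eigenvalues i + ((star V * D * V) i i).re := by
      rw [Matrix.add_apply, Complex.add_re, hdiag]
      simp [Matrix.diagonal_apply_eq, Function.comp]
    rw [this]
    have := abs_le.mp (hq V hV i)
    linarith [this.1]
  calc ((NormedSpace.exp H).trace).re = ∑ i, Real.exp (hH.eigenvalues i) := trace_exp_re hH
    _ = Real.exp c * ∑ i, Real.exp (hH.eigenvalues i - c) := by
        rw [Finset.mul_sum]
        refine Finset.sum_congr rfl fun i _ => ?_
        rw [← Real.exp_add]; ring_nf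
    _ ≤ Real.exp c * ∑ i, ((star V * NormedSpace.exp (H + D) * V) i i).re := by
        refine mul_le_mul_of_nonneg_left (Finset.sum_le_sum fun i _ => key i)
          (Real.exp_nonneg c)
    _ = Real.exp c * ((NormedSpace.exp (H + D)).trace).re := by
        rw [trace_conj_sum hV]

lemma herm_csmul {z : ℂ} (hz : star z = z) {M : Matrix (Fin n) (Fin n) ℂ}
    (hM : M.IsHermitian) : (z • M).IsHermitian := by
  unfold Matrix.IsHermitian
  rw [Matrix.conjTranspose_smul, hz, hM]

lemma hq_smul (r : ℝ) {Dm : Matrix (Fin n) (Fin n) ℂ} (hDm : Dm.IsHermitian) {K : ℝ}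
    (hK : ∀ i, |hDm.eigenvalues i| ≤ K) :
    ∀ (V : Matrix (Fin n) (Fin n) ℂ), star V * V = 1 →
      ∀ i, |((star V * ((r : ℂ) • Dm) * V) i i).re| ≤ |r| * K := by
  intro V hV i
  have h1 : star V * ((r : ℂ) • Dm) * V = (r : ℂ) • (star V * Dm * V) := by
    rw [Matrix.mul_smul, Matrix.smul_mul]
  have h2 : (((r : ℂ) • (star V * Dm * V)) i i).re = r * ((star V * Dm * V) i i).re := by
    simp [Matrix.smul_apply, smul_eq_mul]
  rw [h1, h2, abs_mul]
  exact mul_le_mul_of_nonneg_left (quad_bound hDm hK hV i) (abs_nonneg r)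

/-- The free-energy density `f(X) = −(1/(L·β))·log(Tr(exp(−β·X)))` of a matrix `X`
(the trace of the exponential of a Hermitian matrix is a positive real, and we take
the real part of the trace and the real logarithm). -/
noncomputable def freeEnergy (L : ℕ) (β : ℝ) {n : Type*} [Fintype n] [DecidableEq n]
    (X : Matrix n n ℂ) : ℝ :=
  -(1 / (L * β)) * Real.log ((NormedSpace.exp ((-β : ℂ) • X)).trace).re

/-- Lemma S1, quantitative form: if every eigenvalue of the Hermitian
matrix `D = A − B` is bounded by `K` in absolute value, then
`|f(A) − f(B)| ≤ K / L`. -/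
theorem freeEnergy_lipschitz (n L : ℕ) (hn : 1 ≤ n) (hL : 1 ≤ L) (β K : ℝ)
    (hβ : 0 < β) (hK : 0 ≤ K) (A B : Matrix (Fin n) (Fin n) ℂ)
    (hA : A.IsHermitian) (hB : B.IsHermitian)
    (hD : ∀ i, |(hA.sub hB).eigenvalues i| ≤ K) :
    |freeEnergy L β A - freeEnergy L β B| ≤ K / L := by
  have hstar : star (-β : ℂ) = (-β : ℂ) := by
    simp [Complex.star_def]
  have hA' : ((-β : ℂ) • A).IsHermitian := herm_csmul hstar hA
  have hB' : ((-β : ℂ) • B).IsHermitian := herm_csmul hstar hB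
  have hDm : (A - B).IsHermitian := hA.sub hB
  set TA := ((NormedSpace.exp ((-β : ℂ) • A)).trace).re with hTA
  set TB := ((NormedSpace.exp ((-β : ℂ) • B)).trace).re with hTB
  have hne : Nonempty (Fin n) := ⟨⟨0, hn⟩⟩
  have hTApos : 0 < TA := by
    rw [hTA, trace_exp_re hA']
    exact Finset.sum_pos (fun i _ => Real.exp_pos _) Finset.univ_nonempty
  have hTBpos : 0 < TB := by
    rw [hTB, trace_exp_re hB']
    exact Finset.sum_pos (fun i _ => Real.exp_pos _) Finset.univ_nonempty
  -- direction 1 : TA ≤ e^{βK} TB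
  have hq1 : ∀ (V : Matrix (Fin n) (Fin n) ℂ), star V * V = 1 →
      ∀ i, |((star V * (((-β : ℝ) : ℂ) • (A - B)) * V) i i).re| ≤ β * K := by
    intro V hV i
    have := hq_smul (-β) hDm hD V hV i
    rwa [abs_neg, abs_of_pos hβ] at this
  have hq2 : ∀ (V : Matrix (Fin n) (Fin n) ℂ), star V * V = 1 →
      ∀ i, |((star V * ((β : ℂ) • (A - B)) * V) i i).re| ≤ β * K := by
    intro V hV i
    have := hq_smul β hDm hD V hV i
    rwa [abs_of_pos hβ] at this
  have hsum1 : (-β : ℂ) • A + (β : ℂ) • (A - B) = (-β : ℂ) • B := by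
    module
  have hsum2 : (-β : ℂ) • B + ((-β : ℝ) : ℂ) • (A - B) = (-β : ℂ) • A := by
    push_cast
    module
  have h1 : TA ≤ Real.exp (β * K) * TB := by
    have hHD : ((-β : ℂ) • A + (β : ℂ) • (A - B)).IsHermitian := by rw [hsum1]; exact hB'
    have := trace_exp_le hA' hHD hq2
    rw [hsum1] at this
    exact this
  have h2 : TB ≤ Real.exp (β * K) * TA := by
    have hHD : ((-β : ℂ) • B + ((-β : ℝ) : ℂ) • (A - B)).IsHermitian := by
      rw [hsum2]; exact hA'
    have := trace_exp_le hB' hHD hq1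
    rw [hsum2] at this
    exact this
  have hlog : |Real.log TA - Real.log TB| ≤ β * K := by
    have l1 : Real.log TA ≤ β * K + Real.log TB := by
      calc Real.log TA ≤ Real.log (Real.exp (β * K) * TB) :=
            Real.log_le_log hTApos h1
        _ = β * K + Real.log TB := by
            rw [Real.log_mul (Real.exp_ne_zero _) (ne_of_gt hTBpos), Real.log_exp]
    have l2 : Real.log TB ≤ β * K + Real.log TA := by
      calc Real.log TB ≤ Real.log (Real.exp (β * K) * TA) :=
            Real.log_le_log hTBpos h2
        _ = β * K + Real.log TA := by
            rw [Real.log_mul (Real.exp_ne_zero _) (ne_of_gt hTApos), Real.log_exp]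
    rw [abs_sub_le_iff]
    constructor <;> linarith
  have hL0 : (0 : ℝ) < (L : ℝ) := by exact_mod_cast Nat.lt_of_lt_of_le Nat.zero_lt_one hL
  have hLβ : 0 < (L : ℝ) * β := mul_pos hL0 hβ
  have hfe : freeEnergy L β A - freeEnergy L β B
      = -(1 / ((L : ℝ) * β)) * (Real.log TA - Real.log TB) := by
    simp only [freeEnergy, hTA, hTB]
    ring
  rw [hfe, abs_mul, abs_neg, abs_of_pos (by positivity : (0:ℝ) < 1 / ((L : ℝ) * β))]
  calc 1 / ((L : ℝ) * β) * |Real.log TA - Real.log TB|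
      ≤ 1 / ((L : ℝ) * β) * (β * K) := by
        exact mul_le_mul_of_nonneg_left hlog (by positivity)
    _ = K / L := by field_simp
end

section
/- Let L ≥ 2 be an even natural number, let 0 < p ≤ 1 and 0 ≤ δ ≤ 1 be reals. Under the Erdős–Rényi measure G(L,p), the probability of the event that there exists a subset A ⊆ Fin L with |A| = L/2 and e_ω(A, Aᶜ) ≥ (1+δ)·p·L²/4 is at most binom(L, L/2)·exp(−δ²·p·L²/12). -/
open MeasureTheory Finset

/-- The unordered pairs of distinct vertices of `Fin L` (the potential edges). -/
abbrev EdgePairs (L : ℕ) := {e : Sym2 (Fin L) // ¬ e.IsDiag}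

/-- The Bernoulli measure on `Bool` with parameter `p`. -/
noncomputable def bern (p : ℝ) : Measure Bool :=
  p.toNNReal • Measure.dirac true + (1 - p).toNNReal • Measure.dirac false

instance bern.sigmaFinite (p : ℝ) : SigmaFinite (bern p) := by unfold bern; infer_instance

/-- The Erdős–Rényi measure `G(L,p)`: the product probability measure on functions `ω`
from the set of unordered pairs of distinct elements of `Fin L` to `{0,1} ≃ Bool`, where
each coordinate is Bernoulli with parameter `p`.  A sample `ω` determines the simple
graph whose edges are the pairs mapped to `true`. -/
noncomputable def erMeasure (L : ℕ) (p : ℝ) : Measure (EdgePairs L → Bool) :=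
  Measure.pi fun _ => bern p

/-- `cutCount L ω S T` is the number of edges of the graph sampled by `ω` having one
endpoint in `S` and the other in `T` (for disjoint `S`, `T`); written `e_ω(S,T)`. -/
def cutCount (L : ℕ) (ω : EdgePairs L → Bool) (S T : Finset (Fin L)) : ℕ :=
  (Finset.univ.filter fun e : EdgePairs L =>
    ω e = true ∧ ∃ v ∈ S, ∃ w ∈ T, e.1 = s(v, w)).card

/-! ### Auxiliary lemmas -/

theorem my_lintegral_fin_pi {n : ℕ} {E : Fin n → Type*} [∀ i, MeasurableSpace (E i)]
    (μ : ∀ i, Measure (E i)) [∀ i, SigmaFinite (μ i)]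
    (f : ∀ i, E i → ENNReal) (hf : ∀ i, Measurable (f i)) :
    ∫⁻ x : ∀ i, E i, ∏ i, f i (x i) ∂Measure.pi μ = ∏ i, ∫⁻ x, f i x ∂μ i := by
  induction n with
  | zero => simp [Measure.pi_empty_univ]
  | succ n ih =>
      have A := (measurePreserving_piFinSuccAbove μ 0).symm
      have hm : Measurable fun x : ∀ i, E i => ∏ i, f i (x i) := by
        exact Finset.measurable_prod _ fun i _ => (hf i).comp (measurable_pi_apply i)
      have hg : Measurable fun y : ∀ j : Fin n, E (Fin.succ j) =>
          ∏ j : Fin n, f (Fin.succ j) (y j) := by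
        exact Finset.measurable_prod _ fun j _ => (hf _).comp (measurable_pi_apply j)
      calc ∫⁻ x : ∀ i, E i, ∏ i, f i (x i) ∂Measure.pi μ
          = ∫⁻ y : E 0 × (∀ j : Fin n, E (Fin.succ j)),
              f 0 y.1 * ∏ j : Fin n, f (Fin.succ j) (y.2 j)
              ∂(μ 0).prod (Measure.pi fun j => μ (Fin.succ j)) := by
            rw [← A.lintegral_comp hm]
            congr 1
            ext y
            simp_rw [MeasurableEquiv.piFinSuccAbove_symm_apply, Fin.insertNthEquiv,
              Fin.prod_univ_succ, Fin.insertNth_zero]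
            simp [Fin.zero_succAbove, Function.comp_def]
            rfl
        _ = (∫⁻ x, f 0 x ∂μ 0) * ∏ j : Fin n, ∫⁻ x, f (Fin.succ j) x ∂μ (Fin.succ j) := by
            rw [lintegral_prod_mul (hf 0).aemeasurable hg.aemeasurable,
              ih _ _ fun j => hf _]
        _ = ∏ i, ∫⁻ x, f i x ∂μ i := by rw [Fin.prod_univ_succ]

theorem my_lintegral_pi {ι : Type*} [Fintype ι] {E : ι → Type*} [∀ i, MeasurableSpace (E i)]
    (μ : ∀ i, Measure (E i)) [∀ i, SigmaFinite (μ i)]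
    (f : ∀ i, E i → ENNReal) (hf : ∀ i, Measurable (f i)) :
    ∫⁻ x : ∀ i, E i, ∏ i, f i (x i) ∂Measure.pi μ = ∏ i, ∫⁻ x, f i x ∂μ i := by
  let e := (Fintype.equivFin ι).symm
  have hm : Measurable fun x : ∀ i, E i => ∏ i, f i (x i) := by
    exact Finset.measurable_prod _ fun i _ => (hf i).comp (measurable_pi_apply i)
  rw [← (measurePreserving_piCongrLeft μ e).lintegral_comp hm]
  have : ∀ y : ∀ i', E (e i'), (fun x : ∀ i, E i => ∏ i, f i (x i))
      ((MeasurableEquiv.piCongrLeft E e) y) = ∏ i', f (e i') (y i') := by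
    intro y
    show ∏ i : ι, f i ((MeasurableEquiv.piCongrLeft E e) y i) = _
    rw [← Equiv.prod_comp e (fun i => f i ((MeasurableEquiv.piCongrLeft E e) y i))]
    exact Finset.prod_congr rfl fun i' _ => by
      rw [MeasurableEquiv.coe_piCongrLeft, Equiv.piCongrLeft_apply_apply]
  simp_rw [this]
  rw [my_lintegral_fin_pi _ _ fun i' => hf _, ← e.prod_comp]

lemma my_log_lb {x : ℝ} (h0 : 0 ≤ x) (h1 : x ≤ 1) : x * Real.log 2 ≤ Real.log (1 + x) := by
  have hc : ConcaveOn ℝ (Set.Ioi 0) Real.log := strictConcaveOn_log_Ioi.concaveOn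
  have := hc.2 (Set.mem_Ioi.mpr one_pos) (Set.mem_Ioi.mpr two_pos)
    (by linarith : (0:ℝ) ≤ 1 - x) h0 (by ring)
  simp only [smul_eq_mul, Real.log_one, mul_zero, zero_add] at this
  calc x * Real.log 2 = (1 - x) * 0 + x * Real.log 2 := by ring
    _ ≤ Real.log ((1 - x) * 1 + x * 2) := by
        simpa [Real.log_one] using this
    _ = Real.log (1 + x) := by ring_nf

lemma my_key_ineq {δ : ℝ} (h0 : 0 ≤ δ) (h1 : δ ≤ 1) :
    δ - (1 + δ) * Real.log (1 + δ) ≤ -δ ^ 2 / 3 := by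
  set f : ℝ → ℝ := fun x => (1 + x) * Real.log (1 + x) - x - x ^ 2 / 3 with hf
  have hd : ∀ x ∈ Set.Icc (0:ℝ) 1, HasDerivAt f (Real.log (1 + x) - 2 * x / 3) x := by
    intro x hx
    have hne : (1 + x) ≠ 0 := by have := hx.1; positivity
    have h1' : HasDerivAt (fun y : ℝ => 1 + y) 1 x := (hasDerivAt_id x).const_add 1
    have h2' : HasDerivAt (fun y : ℝ => Real.log (1 + y)) (1 / (1 + x)) x := by
      simpa [Function.comp_def] using (Real.hasDerivAt_log hne).comp x h1'
    have h3' : HasDerivAt (fun y : ℝ => (1 + y) * Real.log (1 + y))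
        (1 * Real.log (1 + x) + (1 + x) * (1 / (1 + x))) x := h1'.mul h2'
    have h4' : HasDerivAt (fun y : ℝ => y + y ^ 2 / 3) (1 + 2 * x / 3) x := by
      simpa [Pi.add_def] using (hasDerivAt_id x).add ((hasDerivAt_pow 2 x).div_const 3)
    have h5' := h3'.sub h4'
    have hfe : (fun y : ℝ => (1 + y) * Real.log (1 + y) - (y + y ^ 2 / 3)) = f := by
      funext y; simp only [hf]; ring
    simp only [Pi.sub_def] at h5'
    rw [hfe] at h5'
    refine h5'.congr_deriv ?_
    rw [mul_one_div_cancel hne]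
    ring
  have hmono : MonotoneOn f (Set.Icc (0:ℝ) 1) := by
    apply monotoneOn_of_deriv_nonneg (convex_Icc 0 1)
    · exact fun x hx => ((hd x hx).continuousAt).continuousWithinAt
    · intro x hx
      rw [interior_Icc] at hx
      exact ((hd x ⟨le_of_lt hx.1, le_of_lt hx.2⟩).differentiableAt).differentiableWithinAt
    · intro x hx
      rw [interior_Icc] at hx
      rw [(hd x ⟨le_of_lt hx.1, le_of_lt hx.2⟩).deriv]
      have hlog : x * Real.log 2 ≤ Real.log (1 + x) := my_log_lb (le_of_lt hx.1) (le_of_lt hx.2)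
      have h2 : (0.6931471803 : ℝ) < Real.log 2 := Real.log_two_gt_d9
      nlinarith [hx.1.le]
  have h00 : f 0 = 0 := by simp [hf]
  have := hmono (Set.mem_Icc.mpr ⟨le_refl 0, zero_le_one⟩) (Set.mem_Icc.mpr ⟨h0, h1⟩) h0
  rw [h00] at this
  simp only [hf] at this
  nlinarith

lemma my_cross_card (L : ℕ) (A B : Finset (Fin L)) (hAB : Disjoint A B) :
    (Finset.univ.filter fun e : EdgePairs L =>
      ∃ v ∈ A, ∃ w ∈ B, e.1 = s(v, w)).card = A.card * B.card := by
  rw [← Finset.card_product]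
  symm
  have hne : ∀ {v w : Fin L}, v ∈ A → w ∈ B → v ≠ w := by
    intro v w hv hw h
    exact (Finset.disjoint_left.mp hAB hv) (h ▸ hw)
  apply Finset.card_bij (fun (q : Fin L × Fin L) hq =>
    (⟨s(q.1, q.2), by
      rw [Finset.mem_product] at hq
      simp only [Sym2.isDiag_iff_proj_eq]
      exact hne hq.1 hq.2⟩ : EdgePairs L))
  · intro q hq
    rw [Finset.mem_product] at hq
    simp only [Finset.mem_filter, Finset.mem_univ, true_and]
    exact ⟨q.1, hq.1, q.2, hq.2, rfl⟩
  · intro q1 hq1 q2 hq2 h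
    rw [Finset.mem_product] at hq1 hq2
    simp only [Subtype.mk.injEq, Sym2.eq_iff] at h
    rcases h with ⟨h1, h2⟩ | ⟨h1, h2⟩
    · exact Prod.ext h1 h2
    · exact absurd (h1 ▸ hq2.2) (Finset.disjoint_left.mp hAB hq1.1)
  · intro e he
    simp only [Finset.mem_filter, Finset.mem_univ, true_and] at he
    obtain ⟨v, hv, w, hw, hvw⟩ := he
    exact ⟨(v, w), Finset.mem_product.mpr ⟨hv, hw⟩, Subtype.ext hvw.symm⟩


lemma my_nnreal_smul_measure (c : NNReal) (μ : Measure Bool) :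
    c • μ = (c : ENNReal) • μ := rfl

lemma my_F_prod (L : ℕ) (t : ℝ) (E : Finset (EdgePairs L)) (ω : EdgePairs L → Bool) :
    ENNReal.ofReal (Real.exp (t * ((E.filter fun e => ω e = true).card : ℝ)))
    = ∏ e : EdgePairs L,
      (fun b => if e ∈ E then (if b = true then ENNReal.ofReal (Real.exp t) else 1) else 1)
        (ω e) := by
  simp only []
  rw [Finset.prod_ite_mem, Finset.univ_inter, ← Finset.prod_filter, Finset.prod_const,
    ← ENNReal.ofReal_pow (Real.exp_nonneg t), ← Real.exp_nat_mul]
  congr 2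
  ring

lemma my_F_lintegral (L : ℕ) (p t : ℝ) (hp0 : 0 < p) (hp1 : p ≤ 1)
    (E : Finset (EdgePairs L)) :
    ∫⁻ ω, ∏ e : EdgePairs L,
      (fun b => if e ∈ E then (if b = true then ENNReal.ofReal (Real.exp t) else 1) else 1)
        (ω e) ∂erMeasure L p
      = ENNReal.ofReal ((p * Real.exp t + (1 - p)) ^ E.card) := by
  rw [erMeasure]
  rw [my_lintegral_pi (fun _ => bern p)
    (fun e b => if e ∈ E then (if b = true then ENNReal.ofReal (Real.exp t) else 1) else 1)
    (fun e => Measurable.of_discrete)]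
  have hfac : ∀ e : EdgePairs L,
      (∫⁻ b, (if e ∈ E then (if b = true then ENNReal.ofReal (Real.exp t) else 1) else 1)
        ∂bern p) = if e ∈ E then ENNReal.ofReal (p * Real.exp t + (1 - p)) else 1 := by
    intro e
    by_cases he : e ∈ E <;> simp only [he, if_true, if_false]
    · rw [bern, lintegral_add_measure, my_nnreal_smul_measure, my_nnreal_smul_measure,
        lintegral_smul_measure, lintegral_smul_measure, lintegral_dirac, lintegral_dirac]
      simp only [if_true, Bool.false_eq_true, if_false, smul_eq_mul, mul_one]
      rw [show ((p.toNNReal : ENNReal)) = ENNReal.ofReal p from rfl,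
        show (((1 - p).toNNReal : ENNReal)) = ENNReal.ofReal (1 - p) from rfl,
        ← ENNReal.ofReal_mul hp0.le, ← ENNReal.ofReal_add (by positivity) (by linarith)]
    · rw [bern, lintegral_add_measure, my_nnreal_smul_measure, my_nnreal_smul_measure,
        lintegral_smul_measure, lintegral_smul_measure,
        lintegral_dirac, lintegral_dirac, smul_eq_mul, smul_eq_mul, mul_one, mul_one,
        show ((p.toNNReal : ENNReal)) = ENNReal.ofReal p from rfl,
        show (((1 - p).toNNReal : ENNReal)) = ENNReal.ofReal (1 - p) from rfl,
        ← ENNReal.ofReal_add hp0.le (by linarith)]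
      norm_num
  simp_rw [hfac]
  rw [Finset.prod_ite_mem, Finset.univ_inter, Finset.prod_const,
    ← ENNReal.ofReal_pow (by nlinarith [Real.exp_nonneg t] : (0:ℝ) ≤ p * Real.exp t + (1 - p))]

lemma my_single_cut (L : ℕ) (hL2 : 2 ≤ L) (hLeven : Even L)
    (p δ : ℝ) (hp0 : 0 < p) (hp1 : p ≤ 1) (hδ0 : 0 ≤ δ) (hδ1 : δ ≤ 1)
    (A : Finset (Fin L)) (hA : A.card = L / 2) :
    erMeasure L p {ω | (1 + δ) * p * (L : ℝ) ^ 2 / 4 ≤ (cutCount L ω A Aᶜ : ℝ)}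
      ≤ ENNReal.ofReal (Real.exp (-δ ^ 2 * p * (L : ℝ) ^ 2 / 12)) := by
  set t := Real.log (1 + δ) with ht
  have h1δ : (0:ℝ) < 1 + δ := by linarith
  have ht0 : 0 ≤ t := Real.log_nonneg (by linarith)
  have het : Real.exp t = 1 + δ := Real.exp_log h1δ
  set E : Finset (EdgePairs L) := Finset.univ.filter
    (fun e => ∃ v ∈ A, ∃ w ∈ Aᶜ, e.1 = s(v, w)) with hE
  have hcard : E.card = (L / 2) * (L / 2) := by
    rw [hE, my_cross_card L A Aᶜ disjoint_compl_right, hA, Finset.card_compl, hA,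
      Fintype.card_fin]
    obtain ⟨m, rfl⟩ := hLeven
    congr 1
    omega
  have hn : ((E.card : ℝ)) = (L : ℝ) ^ 2 / 4 := by
    obtain ⟨m, rfl⟩ := hLeven
    rw [hcard]
    have h2m : (m + m) / 2 = m := by omega
    rw [h2m]
    push_cast
    ring
  have hcut : ∀ ω, cutCount L ω A Aᶜ = (E.filter fun e => ω e = true).card := by
    intro ω
    rw [hE, Finset.filter_filter]
    unfold cutCount
    congr 1
    apply Finset.filter_congr
    intro e _
    exact and_comm
  set c : ℝ := (1 + δ) * p * (L : ℝ) ^ 2 / 4 with hc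
  set K : ℝ := p * Real.exp t + (1 - p) with hK
  have hK0 : 0 ≤ K := by rw [hK, het]; nlinarith
  set F : (EdgePairs L → Bool) → ENNReal := fun ω =>
    ENNReal.ofReal (Real.exp (t * ((E.filter fun e => ω e = true).card : ℝ))) with hF
  have hFprod : ∀ ω, F ω = ∏ e : EdgePairs L,
      (fun b => if e ∈ E then (if b = true then ENNReal.ofReal (Real.exp t) else 1) else 1)
        (ω e) := fun ω => my_F_prod L t E ω
  have hFmeas : Measurable F := measurable_of_countable F
  have hIF : ∫⁻ ω, F ω ∂erMeasure L p = ENNReal.ofReal (K ^ E.card) := by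
    calc ∫⁻ ω, F ω ∂erMeasure L p
        = ∫⁻ ω, ∏ e : EdgePairs L,
            (fun b => if e ∈ E then (if b = true then ENNReal.ofReal (Real.exp t) else 1) else 1)
              (ω e) ∂erMeasure L p := by
          exact lintegral_congr fun ω => hFprod ω
      _ = ENNReal.ofReal (K ^ E.card) := my_F_lintegral L p t hp0 hp1 E
  set ε : ENNReal := ENNReal.ofReal (Real.exp (t * c)) with hε
  have hε0 : ε ≠ 0 := by
    rw [hε]
    simp [Real.exp_pos]
  have hεtop : ε ≠ ⊤ := ENNReal.ofReal_ne_top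
  have hsub : {ω : EdgePairs L → Bool | c ≤ (cutCount L ω A Aᶜ : ℝ)} ⊆
      {ω | ε ≤ F ω} := by
    intro ω hω
    simp only [Set.mem_setOf_eq] at hω ⊢
    rw [hF, hε]
    apply ENNReal.ofReal_le_ofReal
    apply Real.exp_le_exp.mpr
    apply mul_le_mul_of_nonneg_left _ ht0
    rw [← hcut ω]
    exact hω
  calc erMeasure L p {ω | c ≤ (cutCount L ω A Aᶜ : ℝ)}
      ≤ erMeasure L p {ω | ε ≤ F ω} := measure_mono hsub
    _ ≤ (∫⁻ ω, F ω ∂erMeasure L p) / ε :=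
        meas_ge_le_lintegral_div hFmeas.aemeasurable hε0 hεtop
    _ = ENNReal.ofReal (K ^ E.card / Real.exp (t * c)) := by
        rw [hIF, hε, ENNReal.ofReal_div_of_pos (Real.exp_pos _)]
    _ ≤ ENNReal.ofReal (Real.exp (-δ ^ 2 * p * (L : ℝ) ^ 2 / 12)) := by
        apply ENNReal.ofReal_le_ofReal
        rw [div_le_iff₀ (Real.exp_pos _), ← Real.exp_add]
        have h1 : K ≤ Real.exp (p * δ) := by
          rw [hK, het]
          have := Real.add_one_le_exp (p * δ)
          nlinarith
        have h2 : K ^ E.card ≤ Real.exp (p * δ) ^ E.card := pow_le_pow_left₀ hK0 h1 _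
        rw [← Real.exp_nat_mul] at h2
        refine h2.trans (Real.exp_le_exp.mpr ?_)
        have hkey := my_key_ineq hδ0 hδ1
        rw [← ht] at hkey
        have hmul := mul_le_mul_of_nonneg_left hkey
          (show (0:ℝ) ≤ p * (L : ℝ) ^ 2 / 4 by positivity)
        rw [hn, hc]
        nlinarith

/-- Chernoff plus union bound over balanced cuts: for even `L ≥ 2`,
`0 < p ≤ 1` and `0 ≤ δ ≤ 1`, the probability under `G(L,p)` that some subset `A` of size
`L/2` has cut `e_ω(A, Aᶜ) ≥ (1+δ)·p·L²/4` is at most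
`binom(L, L/2)·exp(−δ²·p·L²/12)`. -/
theorem er_balanced_cut_chernoff_union (L : ℕ) (hL2 : 2 ≤ L) (hLeven : Even L)
    (p δ : ℝ) (hp0 : 0 < p) (hp1 : p ≤ 1) (hδ0 : 0 ≤ δ) (hδ1 : δ ≤ 1) :
    erMeasure L p {ω | ∃ A : Finset (Fin L), A.card = L / 2 ∧
        (1 + δ) * p * (L : ℝ) ^ 2 / 4 ≤ (cutCount L ω A Aᶜ : ℝ)}
      ≤ ENNReal.ofReal ((L.choose (L / 2) : ℝ) * Real.exp (-δ ^ 2 * p * (L : ℝ) ^ 2 / 12)) := by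
  classical
  have hunion : {ω : EdgePairs L → Bool | ∃ A : Finset (Fin L), A.card = L / 2 ∧
      (1 + δ) * p * (L : ℝ) ^ 2 / 4 ≤ (cutCount L ω A Aᶜ : ℝ)} =
      ⋃ A ∈ Finset.powersetCard (L / 2) (Finset.univ : Finset (Fin L)),
        {ω | (1 + δ) * p * (L : ℝ) ^ 2 / 4 ≤ (cutCount L ω A Aᶜ : ℝ)} := by
    ext ω
    simp [Finset.mem_powersetCard_univ]
  rw [hunion]
  calc erMeasure L p (⋃ A ∈ Finset.powersetCard (L / 2) (Finset.univ : Finset (Fin L)),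
        {ω | (1 + δ) * p * (L : ℝ) ^ 2 / 4 ≤ (cutCount L ω A Aᶜ : ℝ)})
      ≤ ∑ A ∈ Finset.powersetCard (L / 2) (Finset.univ : Finset (Fin L)),
          erMeasure L p {ω | (1 + δ) * p * (L : ℝ) ^ 2 / 4 ≤ (cutCount L ω A Aᶜ : ℝ)} :=
        measure_biUnion_finset_le _ _
    _ ≤ ∑ A ∈ Finset.powersetCard (L / 2) (Finset.univ : Finset (Fin L)),
          ENNReal.ofReal (Real.exp (-δ ^ 2 * p * (L : ℝ) ^ 2 / 12)) := by
        apply Finset.sum_le_sum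
        intro A hA
        exact my_single_cut L hL2 hLeven p δ hp0 hp1 hδ0 hδ1 A
          (Finset.mem_powersetCard_univ.mp hA)
    _ = (L.choose (L / 2) : ENNReal) * ENNReal.ofReal (Real.exp (-δ ^ 2 * p * (L : ℝ) ^ 2 / 12)) := by
        rw [Finset.sum_const, Finset.card_powersetCard, Finset.card_univ, Fintype.card_fin,
          nsmul_eq_mul]
    _ = ENNReal.ofReal ((L.choose (L / 2) : ℝ) * Real.exp (-δ ^ 2 * p * (L : ℝ) ^ 2 / 12)) := by
        rw [ENNReal.ofReal_mul (by positivity), ENNReal.ofReal_natCast]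
end

section
/- For every real 0 < p ≤ 1 there exists a constant c > 0 such that the probability P_L, under the Erdős–Rényi measure G(L,p), of the event that every subset A ⊆ Fin L satisfies |e_ω(A, Aᶜ) − p·|A|·(L − |A|)| ≤ c·L^{3/2}, tends to 1 as L → ∞. -/
open MeasureTheory Finset
open scoped ENNReal

/- ### Auxiliary lemmas -/

lemma exp_quad {x : ℝ} (hx : |x| ≤ 1) : Real.exp x ≤ 1 + x + x ^ 2 := by
  have h := Real.exp_bound hx (n := 2) (by norm_num)
  have h2 : ∑ m ∈ range 2, x ^ m / (m.factorial : ℝ) = 1 + x := by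
    simp [Finset.sum_range_succ]
  rw [h2] at h
  norm_num at h
  have habs := abs_le.1 h
  have hx2 : |x| ^ 2 = x ^ 2 := sq_abs x
  nlinarith [sq_nonneg x, habs.2]

lemma bern_factor_le {p s : ℝ} (hp0 : 0 ≤ p) (hp1 : p ≤ 1) (hs : |s| ≤ 1) :
    p * Real.exp (s * (1 - p)) + (1 - p) * Real.exp (s * (0 - p)) ≤ Real.exp (s ^ 2 / 4) := by
  have habs : |s| * |1 - p| ≤ 1 := by
    have h : |1 - p| ≤ 1 := by rw [abs_le]; constructor <;> linarith
    calc |s| * |1 - p| ≤ 1 * 1 := mul_le_mul hs h (abs_nonneg _) zero_le_one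
      _ = 1 := by ring
  have habs2 : |s| * |0 - p| ≤ 1 := by
    have h : |0 - p| ≤ 1 := by rw [abs_le]; constructor <;> linarith
    calc |s| * |0 - p| ≤ 1 * 1 := mul_le_mul hs h (abs_nonneg _) zero_le_one
      _ = 1 := by ring
  have h1 : Real.exp (s * (1 - p)) ≤ 1 + s * (1 - p) + (s * (1 - p)) ^ 2 :=
    exp_quad (by rw [abs_mul]; exact habs)
  have h2 : Real.exp (s * (0 - p)) ≤ 1 + s * (0 - p) + (s * (0 - p)) ^ 2 :=
    exp_quad (by rw [abs_mul]; exact habs2)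
  have h3 : s ^ 2 / 4 + 1 ≤ Real.exp (s ^ 2 / 4) := Real.add_one_le_exp _
  have hs2 : s ^ 2 ≤ 1 := by
    have := abs_le.1 hs; nlinarith
  nlinarith [mul_nonneg hp0 (sq_nonneg (s * (1 - p))), sq_nonneg (s*(1-2*p)),
    mul_nonneg (by linarith : (0:ℝ) ≤ 1 - p) (sq_nonneg (s * p)),
    mul_nonneg (mul_nonneg hp0 (by linarith : (0:ℝ) ≤ 1 - p)) (sq_nonneg s),
    sq_nonneg (1 - 2*p)]

lemma bern_prob {p : ℝ} (hp0 : 0 ≤ p) (hp1 : p ≤ 1) : IsProbabilityMeasure (bern p) := by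
  constructor
  simp only [bern, Measure.coe_add, Pi.add_apply, Measure.smul_apply, smul_eq_mul,
    Measure.dirac_apply_of_mem (Set.mem_univ _), mul_one]
  show (p.toNNReal : ℝ≥0∞) * 1 + ((1-p).toNNReal : ℝ≥0∞) * 1 = 1
  rw [mul_one, mul_one, show ((p.toNNReal : ℝ≥0∞)) = ENNReal.ofReal p from rfl,
    show (((1-p).toNNReal : ℝ≥0∞)) = ENNReal.ofReal (1-p) from rfl,
    ← ENNReal.ofReal_add hp0 (by linarith)]
  norm_num

lemma bern_integral {p : ℝ} (hp0 : 0 ≤ p) (hp1 : p ≤ 1) (g : Bool → ℝ) :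
    ∫ b, g b ∂(bern p) = p * g true + (1 - p) * g false := by
  unfold bern
  rw [integral_add_measure Integrable.of_finite Integrable.of_finite]
  rw [show (p.toNNReal • Measure.dirac true : Measure Bool)
      = ((p.toNNReal : ℝ≥0∞) • Measure.dirac true) from rfl,
    show ((1-p).toNNReal • Measure.dirac false : Measure Bool)
      = (((1-p).toNNReal : ℝ≥0∞) • Measure.dirac false) from rfl,
    integral_smul_measure, integral_smul_measure, integral_dirac, integral_dirac]
  simp [ENNReal.coe_toReal, Real.coe_toNNReal p hp0, Real.coe_toNNReal (1-p) (by linarith)]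

lemma erMeasure_prob {p : ℝ} (hp0 : 0 ≤ p) (hp1 : p ≤ 1) (L : ℕ) :
    IsProbabilityMeasure (erMeasure L p) := by
  haveI := bern_prob hp0 hp1
  unfold erMeasure; infer_instance

/-- The set of edges crossing the cut `(A, Aᶜ)`. -/
def crossEdges (L : ℕ) (A : Finset (Fin L)) : Finset (EdgePairs L) :=
  Finset.univ.filter fun e : EdgePairs L => ∃ v ∈ A, ∃ w ∈ Aᶜ, e.1 = s(v, w)

lemma cutCount_eq_sum (L : ℕ) (ω : EdgePairs L → Bool) (A : Finset (Fin L)) :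
    (cutCount L ω A Aᶜ : ℝ) = ∑ e ∈ crossEdges L A, (if ω e = true then (1:ℝ) else 0) := by
  rw [cutCount, crossEdges, Finset.card_filter, Finset.sum_filter]
  push_cast
  apply Finset.sum_congr rfl
  intro e _
  by_cases h1 : ω e = true <;> by_cases h2 : ∃ v ∈ A, ∃ w ∈ Aᶜ, (e : Sym2 (Fin L)) = s(v, w) <;>
    simp [h1, h2]

lemma card_crossEdges (L : ℕ) (A : Finset (Fin L)) :
    (crossEdges L A).card = A.card * Aᶜ.card := by
  rw [← Finset.card_product]
  symm
  apply Finset.card_bij (i := fun (vw : Fin L × Fin L) (h : vw ∈ A ×ˢ Aᶜ) =>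
    (⟨s(vw.1, vw.2), by
      rw [Sym2.mk_isDiag_iff]
      have h1 := (Finset.mem_product.1 h).1
      have h2 := Finset.mem_compl.1 (Finset.mem_product.1 h).2
      intro heq; exact h2 (heq ▸ h1)⟩ : EdgePairs L))
  · intro vw h
    simp only [crossEdges, Finset.mem_filter, Finset.mem_univ, true_and]
    exact ⟨vw.1, (Finset.mem_product.1 h).1, vw.2, (Finset.mem_product.1 h).2, rfl⟩
  · intro a ha b hb hab
    have : s(a.1, a.2) = s(b.1, b.2) := congrArg Subtype.val hab
    rw [Sym2.eq_iff] at this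
    have ha1 := (Finset.mem_product.1 ha).1
    have hb2 := Finset.mem_compl.1 (Finset.mem_product.1 hb).2
    rcases this with ⟨h1, h2⟩ | ⟨h1, h2⟩
    · exact Prod.ext h1 h2
    · exfalso; exact hb2 (h1 ▸ ha1)
  · intro e he
    simp only [crossEdges, Finset.mem_filter, Finset.mem_univ, true_and] at he
    obtain ⟨v, hv, w, hw, hvw⟩ := he
    exact ⟨(v, w), Finset.mem_product.2 ⟨hv, hw⟩, Subtype.ext hvw.symm⟩

lemma card_crossEdges_real (L : ℕ) (A : Finset (Fin L)) :
    ((crossEdges L A).card : ℝ) = (A.card : ℝ) * ((L : ℝ) - (A.card : ℝ)) := by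
  rw [card_crossEdges, Finset.card_compl]
  have hle : A.card ≤ Fintype.card (Fin L) := Finset.card_le_univ A
  push_cast [Nat.cast_sub hle]
  rw [Fintype.card_fin]

lemma pi_integral (p : ℝ) (L : ℕ) (g : EdgePairs L → Bool → ℝ) :
    ∫ ω, ∏ e, g e (ω e) ∂(erMeasure L p) = ∏ e, ∫ b, g e b ∂(bern p) := by
  letI : MeasureSpace Bool := ⟨bern p⟩
  haveI : SigmaFinite (volume : Measure Bool) := bern.sigmaFinite p
  exact MeasureTheory.integral_fintype_prod_eq_prod (μ := fun _ => bern p) g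

lemma mgf_sum_le {p s : ℝ} (hp0 : 0 ≤ p) (hp1 : p ≤ 1) (hs : |s| ≤ 1) (L : ℕ)
    (F : Finset (EdgePairs L)) :
    ∫ ω, Real.exp (s * ∑ e ∈ F, ((if ω e = true then (1:ℝ) else 0) - p)) ∂(erMeasure L p)
      ≤ Real.exp (s ^ 2 * F.card / 4) := by
  haveI := bern_prob hp0 hp1
  set g : EdgePairs L → Bool → ℝ := fun e b =>
    if e ∈ F then Real.exp (s * ((if b = true then (1:ℝ) else 0) - p)) else 1 with hg
  have key : ∀ ω : EdgePairs L → Bool,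
      Real.exp (s * ∑ e ∈ F, ((if ω e = true then (1:ℝ) else 0) - p)) = ∏ e, g e (ω e) := by
    intro ω
    rw [Finset.mul_sum, Real.exp_sum]
    calc ∏ x ∈ F, Real.exp (s * ((if ω x = true then (1:ℝ) else 0) - p))
        = ∏ x ∈ F, g x (ω x) := Finset.prod_congr rfl (fun x hx => by simp [hg, hx])
      _ = ∏ e : EdgePairs L, g e (ω e) :=
          Finset.prod_subset (Finset.subset_univ F) (fun x _ hx => by simp [hg, hx])
  simp_rw [key]
  rw [pi_integral]
  have hint : ∀ e : EdgePairs L, ∫ b, g e b ∂(bern p)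
      = if e ∈ F then p * Real.exp (s * (1 - p)) + (1 - p) * Real.exp (s * (0 - p)) else 1 := by
    intro e
    by_cases he : e ∈ F
    · rw [bern_integral hp0 hp1]
      simp [hg, he]
    · simp only [hg, he, if_false]
      rw [integral_const, probReal_univ, smul_eq_mul, mul_one]
  calc ∏ e, ∫ b, g e b ∂(bern p)
      ≤ ∏ e : EdgePairs L, (if e ∈ F then Real.exp (s ^ 2 / 4) else 1) := by
        apply Finset.prod_le_prod
        · intro e _
          rw [hint e]
          by_cases he : e ∈ F
          · simp only [he, if_true]
            have := Real.exp_pos (s * (1 - p))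
            have := Real.exp_pos (s * (0 - p))
            nlinarith
          · simp [he]
        · intro e _
          rw [hint e]
          by_cases he : e ∈ F
          · simp only [he, if_true]; exact bern_factor_le hp0 hp1 hs
          · simp [he]
    _ = Real.exp (s ^ 2 / 4) ^ F.card := by
        rw [← Finset.prod_filter, Finset.prod_const, Finset.filter_mem_eq_inter,
          Finset.univ_inter]
    _ = Real.exp (s ^ 2 * F.card / 4) := by
        rw [← Real.exp_nat_mul]; ring_nf

lemma tail_bound {p : ℝ} (hp0 : 0 ≤ p) (hp1 : p ≤ 1) {L : ℕ} (hL : 1 ≤ L)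
    (F : Finset (EdgePairs L)) (hm : (F.card : ℝ) ≤ (L : ℝ) ^ 2 / 4) :
    erMeasure L p {ω | (L : ℝ) ^ ((3:ℝ)/2) <
        |∑ e ∈ F, ((if ω e = true then (1:ℝ) else 0) - p)|}
      ≤ ENNReal.ofReal (2 * Real.exp (-2 * L)) := by
  haveI := erMeasure_prob hp0 hp1 L
  set μ := erMeasure L p
  set t : ℝ := (L : ℝ) ^ ((3:ℝ)/2) with htdef
  set X : (EdgePairs L → Bool) → ℝ :=
    fun ω => ∑ e ∈ F, ((if ω e = true then (1:ℝ) else 0) - p) with hXdef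
  have hL1 : (1:ℝ) ≤ (L:ℝ) := by exact_mod_cast hL
  have ht1 : 1 ≤ t := by
    rw [htdef, show (1:ℝ) = (1:ℝ) ^ ((3:ℝ)/2) from (Real.one_rpow _).symm]
    exact Real.rpow_le_rpow zero_le_one hL1 (by norm_num)
  have ht0 : 0 < t := lt_of_lt_of_le one_pos ht1
  have ht2 : t ^ 2 = (L : ℝ) ^ (3:ℕ) := by
    rw [htdef, ← Real.rpow_natCast ((L:ℝ) ^ ((3:ℝ)/2)) 2, ← Real.rpow_mul (by positivity),
      ← Real.rpow_natCast (L:ℝ) 3]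
    norm_num
  have hXabs : ∀ ω, |X ω| ≤ (F.card : ℝ) := by
    intro ω
    calc |X ω| ≤ ∑ e ∈ F, |(if ω e = true then (1:ℝ) else 0) - p| :=
          Finset.abs_sum_le_sum_abs _ _
      _ ≤ ∑ _e ∈ F, (1:ℝ) := by
          apply Finset.sum_le_sum; intro e _
          by_cases h : ω e = true <;> simp [h, abs_le] <;> constructor <;> linarith
      _ = F.card := by simp
  by_cases hcase : (F.card : ℝ) ≤ t
  · have : {ω | t < |X ω|} = ∅ := by
      ext ω; simp only [Set.mem_setOf_eq, Set.mem_empty_iff_false, iff_false, not_lt]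
      exact le_trans (hXabs ω) hcase
    rw [this]; simp
  · push_neg at hcase
    set m : ℝ := (F.card : ℝ) with hmdef
    have hm0 : 0 < m := lt_trans ht0 hcase
    set s : ℝ := t / m with hsdef
    have hs0 : 0 < s := div_pos ht0 hm0
    have hs1 : s ≤ 1 := by rw [hsdef, div_le_one hm0]; exact le_of_lt hcase
    have hsabs : |s| ≤ 1 := by rw [abs_of_pos hs0]; exact hs1
    have hexp : -s * t + s ^ 2 * m / 4 ≤ -2 * L := by
      have h1 : -s * t + s ^ 2 * m / 4 = -(3/4) * (t^2 / m) := by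
        rw [hsdef]; field_simp; ring
      rw [h1, ht2]
      have h2 : (L:ℝ)^(3:ℕ) / m ≥ 4 * L := by
        rw [ge_iff_le, le_div_iff₀ hm0]
        calc 4 * (L:ℝ) * m ≤ 4 * L * ((L:ℝ)^2/4) := by
              apply mul_le_mul_of_nonneg_left hm (by positivity)
          _ = (L:ℝ)^(3:ℕ) := by ring
      linarith
    have hup : (μ {ω | t ≤ X ω}).toReal ≤ Real.exp (-2 * L) := by
      have h := ProbabilityTheory.measure_ge_le_exp_mul_mgf (X := X) (μ := μ) (t := s) t
        (le_of_lt hs0) Integrable.of_finite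
      refine h.trans ?_
      have hmgf : ProbabilityTheory.mgf X μ s ≤ Real.exp (s ^ 2 * m / 4) :=
        mgf_sum_le hp0 hp1 hsabs L F
      calc Real.exp (-s * t) * ProbabilityTheory.mgf X μ s
          ≤ Real.exp (-s * t) * Real.exp (s ^ 2 * m / 4) := by
            apply mul_le_mul_of_nonneg_left hmgf (le_of_lt (Real.exp_pos _))
        _ = Real.exp (-s * t + s ^ 2 * m / 4) := (Real.exp_add _ _).symm
        _ ≤ Real.exp (-2 * L) := Real.exp_le_exp.2 hexp
    have hlo : (μ {ω | X ω ≤ -t}).toReal ≤ Real.exp (-2 * L) := by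
      have h := ProbabilityTheory.measure_le_le_exp_mul_mgf (X := X) (μ := μ) (t := -s) (-t)
        (by linarith) Integrable.of_finite
      refine h.trans ?_
      have hmgf : ProbabilityTheory.mgf X μ (-s) ≤ Real.exp ((-s) ^ 2 * m / 4) :=
        mgf_sum_le hp0 hp1 (by rwa [abs_neg]) L F
      calc Real.exp (-(-s) * (-t)) * ProbabilityTheory.mgf X μ (-s)
          ≤ Real.exp (-(-s) * (-t)) * Real.exp ((-s) ^ 2 * m / 4) := by
            apply mul_le_mul_of_nonneg_left hmgf (le_of_lt (Real.exp_pos _))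
        _ = Real.exp (-(-s) * (-t) + (-s) ^ 2 * m / 4) := (Real.exp_add _ _).symm
        _ ≤ Real.exp (-2 * L) := by
            apply Real.exp_le_exp.2
            have heq : -(-s) * (-t) + (-s) ^ 2 * m / 4 = -s * t + s ^ 2 * m / 4 := by ring
            rw [heq]; exact hexp
    have hsub : {ω | t < |X ω|} ⊆ {ω | t ≤ X ω} ∪ {ω | X ω ≤ -t} := by
      intro ω hω
      simp only [Set.mem_setOf_eq] at hω
      rcases le_or_gt 0 (X ω) with h | h
      · left
        rw [Set.mem_setOf_eq]
        rw [abs_of_nonneg h] at hω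
        linarith
      · right
        rw [Set.mem_setOf_eq]
        rw [abs_of_neg h] at hω
        linarith
    calc μ {ω | t < |X ω|} ≤ μ ({ω | t ≤ X ω} ∪ {ω | X ω ≤ -t}) := measure_mono hsub
      _ ≤ μ {ω | t ≤ X ω} + μ {ω | X ω ≤ -t} := measure_union_le _ _
      _ ≤ ENNReal.ofReal (Real.exp (-2*L)) + ENNReal.ofReal (Real.exp (-2*L)) := by
          gcongr
          · exact (ENNReal.le_ofReal_iff_toReal_le (measure_ne_top μ _)
              (le_of_lt (Real.exp_pos _))).2 hup
          · exact (ENNReal.le_ofReal_iff_toReal_le (measure_ne_top μ _)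
              (le_of_lt (Real.exp_pos _))).2 hlo
      _ = ENNReal.ofReal (2 * Real.exp (-2 * L)) := by
          rw [← ENNReal.ofReal_add (le_of_lt (Real.exp_pos _)) (le_of_lt (Real.exp_pos _))]
          ring_nf

/-- Eq. S-EigenvalueBound, uniform cut concentration: for `0 < p ≤ 1`
there is `c > 0` such that the `G(L,p)`-probability that every subset `A ⊆ Fin L`
satisfies `|e_ω(A, Aᶜ) − p·|A|·(L − |A|)| ≤ c·L^{3/2}` tends to `1` as `L → ∞`. -/
theorem er_all_cuts_concentrate (p : ℝ) (hp0 : 0 < p) (hp1 : p ≤ 1) :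
    ∃ c : ℝ, 0 < c ∧
      Filter.Tendsto
        (fun L : ℕ => erMeasure L p {ω | ∀ A : Finset (Fin L),
          |(cutCount L ω A Aᶜ : ℝ) - p * (A.card : ℝ) * ((L : ℝ) - (A.card : ℝ))|
            ≤ c * (L : ℝ) ^ ((3 : ℝ) / 2)})
        Filter.atTop (nhds 1) := by
  have hp0' : 0 ≤ p := le_of_lt hp0
  refine ⟨1, one_pos, ?_⟩
  set good : ∀ L : ℕ, Set (EdgePairs L → Bool) := fun L => {ω | ∀ A : Finset (Fin L),
    |(cutCount L ω A Aᶜ : ℝ) - p * (A.card : ℝ) * ((L : ℝ) - (A.card : ℝ))|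
      ≤ 1 * (L : ℝ) ^ ((3 : ℝ) / 2)} with hgood
  -- rewriting of the deviation
  have hrw : ∀ (L : ℕ) (A : Finset (Fin L)) (ω : EdgePairs L → Bool),
      (cutCount L ω A Aᶜ : ℝ) - p * (A.card : ℝ) * ((L : ℝ) - (A.card : ℝ))
        = ∑ e ∈ crossEdges L A, ((if ω e = true then (1:ℝ) else 0) - p) := by
    intro L A ω
    rw [Finset.sum_sub_distrib, Finset.sum_const, ← cutCount_eq_sum, nsmul_eq_mul,
      card_crossEdges_real]
    ring
  -- the bound on the bad set
  have hbound : ∀ L : ℕ, 1 ≤ L →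
      erMeasure L p (good L)ᶜ ≤ ENNReal.ofReal (2 * (2 * Real.exp (-2)) ^ L) := by
    intro L hL
    have hsub : (good L)ᶜ ⊆ ⋃ A : Finset (Fin L), {ω | (L : ℝ) ^ ((3:ℝ)/2) <
        |∑ e ∈ crossEdges L A, ((if ω e = true then (1:ℝ) else 0) - p)|} := by
      intro ω hω
      simp only [hgood, Set.mem_compl_iff, Set.mem_setOf_eq, not_forall] at hω
      obtain ⟨A, hA⟩ := hω
      rw [Set.mem_iUnion]
      exact ⟨A, by rw [Set.mem_setOf_eq, ← hrw L A ω]; rw [one_mul] at hA; exact not_le.1 hA⟩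
    have hL1 : (1:ℝ) ≤ (L:ℝ) := by exact_mod_cast hL
    calc erMeasure L p (good L)ᶜ
        ≤ ∑' A : Finset (Fin L), erMeasure L p {ω | (L : ℝ) ^ ((3:ℝ)/2) <
            |∑ e ∈ crossEdges L A, ((if ω e = true then (1:ℝ) else 0) - p)|} :=
          le_trans (measure_mono hsub) (measure_iUnion_le _)
      _ = ∑ A : Finset (Fin L), erMeasure L p {ω | (L : ℝ) ^ ((3:ℝ)/2) <
            |∑ e ∈ crossEdges L A, ((if ω e = true then (1:ℝ) else 0) - p)|} := tsum_fintype _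
      _ ≤ ∑ _A : Finset (Fin L), ENNReal.ofReal (2 * Real.exp (-2 * L)) := by
          apply Finset.sum_le_sum
          intro A _
          apply tail_bound hp0' hp1 hL
          rw [card_crossEdges_real]
          have h1 : (0:ℝ) ≤ (A.card : ℝ) := Nat.cast_nonneg _
          have h2 : (A.card : ℝ) ≤ (L:ℝ) := by
            have := Finset.card_le_univ A
            rw [Fintype.card_fin] at this
            exact_mod_cast this
          nlinarith [sq_nonneg ((L:ℝ) - 2 * A.card)]
      _ = ENNReal.ofReal (2 * (2 * Real.exp (-2)) ^ L) := by
          rw [Finset.sum_const, Finset.card_univ, Fintype.card_finset, Fintype.card_fin,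
            nsmul_eq_mul]
          push_cast
          rw [show ((2:ℝ≥0∞) ^ L) = ENNReal.ofReal ((2:ℝ) ^ L) from by
              rw [ENNReal.ofReal_pow (by norm_num)]
              norm_num,
            ← ENNReal.ofReal_mul (by positivity)]
          congr 1
          rw [show (-2 * (L:ℝ)) = (L:ℕ) * (-2) from by ring, Real.exp_nat_mul, mul_pow]
          ring
  -- the real sequence tends to zero
  have hgeo : Filter.Tendsto (fun L : ℕ => 2 * (2 * Real.exp (-2)) ^ L)
      Filter.atTop (nhds 0) := by
    have h01 : (0:ℝ) ≤ 2 * Real.exp (-2) := by positivity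
    have h11 : 2 * Real.exp (-2) < 1 := by
      have hE : (2:ℝ) + 1 < Real.exp 2 := Real.add_one_lt_exp (by norm_num)
      have hinv : Real.exp (-2) = (Real.exp 2)⁻¹ := Real.exp_neg 2
      rw [hinv]
      rw [mul_inv_lt_iff₀ (Real.exp_pos 2)]
      linarith
    have := (tendsto_pow_atTop_nhds_zero_of_lt_one h01 h11).const_mul (2:ℝ)
    simpa using this
  have hofReal : Filter.Tendsto (fun L : ℕ => ENNReal.ofReal (2 * (2 * Real.exp (-2)) ^ L))
      Filter.atTop (nhds 0) := by
    have := ENNReal.tendsto_ofReal hgeo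
    simpa using this
  have hbad0 : Filter.Tendsto (fun L : ℕ => erMeasure L p (good L)ᶜ)
      Filter.atTop (nhds 0) := by
    apply tendsto_of_tendsto_of_tendsto_of_le_of_le' tendsto_const_nhds hofReal
    · exact Filter.Eventually.of_forall fun L => zero_le
    · exact Filter.eventually_atTop.2 ⟨1, hbound⟩
  have hcompl : ∀ L : ℕ, erMeasure L p (good L) = 1 - erMeasure L p (good L)ᶜ := by
    intro L
    haveI := erMeasure_prob hp0' hp1 L
    have hmeas : MeasurableSet ((good L)ᶜ) := (Set.to_countable _).measurableSet
    have := prob_compl_eq_one_sub (μ := erMeasure L p) hmeas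
    rw [compl_compl] at this
    exact this
  have hfinal : Filter.Tendsto (fun L : ℕ => 1 - erMeasure L p (good L)ᶜ)
      Filter.atTop (nhds 1) := by
    have := ENNReal.Tendsto.sub (tendsto_const_nhds (x := (1:ℝ≥0∞)) (f := Filter.atTop))
      hbad0 (Or.inl ENNReal.one_ne_top)
    simpa using this
  exact hfinal.congr fun L => (hcompl L).symm
end

section
/- Let 0 < p ≤ 1 and c > 0 be reals. There exist a constant C > 0 and a natural number L₀, depending only on p and c, with the following property. For every L ≥ L₀ and every simple graph G on Fin L satisfying |e_G(S) − p·|S|·(|S|−1)/2| ≤ c·L^{3/2} for all subsets S ⊆ Fin L, the number of edges N_E of G is positive and, for every σ : Fin L → {−1,1}, |(1/N_E)·Σ_{{v,v'} ∈ E} σ(v)·σ(v') − (M(σ)/L)²| ≤ C·L^{−1/2}, where M(σ) = Σ_v σ(v). -/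
open Finset

/-- `edgesWithin L G S` is `e_G(S)`, the number of edges of the simple graph `G` with
both endpoints in the subset `S`. -/
def edgesWithin (L : ℕ) (G : SimpleGraph (Fin L)) [DecidableRel G.Adj]
    (S : Finset (Fin L)) : ℕ :=
  (G.edgeFinset.filter fun e => ∀ v ∈ e, v ∈ S).card

lemma sum_lift_eq (L : ℕ) (G : SimpleGraph (Fin L)) [DecidableRel G.Adj]
    (σ : Fin L → ℝ) (hσ : ∀ v, σ v = 1 ∨ σ v = -1)
    (S : Finset (Fin L)) (hS : S = univ.filter fun v => σ v = 1) :
    ∑ e ∈ G.edgeFinset, Sym2.lift ⟨fun v w => σ v * σ w, fun _ _ => mul_comm _ _⟩ e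
      = 2 * ((edgesWithin L G S : ℝ) + (edgesWithin L G Sᶜ : ℝ)) - (G.edgeFinset.card : ℝ) := by
  classical
  have hmem : ∀ v, v ∈ S ↔ σ v = 1 := by intro v; simp [hS]
  have hmemc : ∀ v, v ∈ Sᶜ ↔ σ v = -1 := by
    intro v
    simp only [Finset.mem_compl, hmem]
    rcases hσ v with h | h <;> simp [h] <;> norm_num
  have hlift : ∀ e ∈ G.edgeFinset,
      Sym2.lift ⟨fun v w => σ v * σ w, fun _ _ => mul_comm _ _⟩ e
        = 2 * (if (∀ v ∈ e, v ∈ S) then (1:ℝ) else 0)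
          + 2 * (if (∀ v ∈ e, v ∈ Sᶜ) then (1:ℝ) else 0) - 1 := by
    intro e he
    induction e using Sym2.inductionOn with
    | hf v w =>
      rcases hσ v with h1 | h1 <;> rcases hσ w with h2 | h2 <;>
        simp [Sym2.mem_iff, hmem, hmemc, h1, h2] <;> norm_num
  rw [Finset.sum_congr rfl hlift]
  rw [Finset.sum_sub_distrib, Finset.sum_add_distrib, ← Finset.mul_sum, ← Finset.mul_sum,
    Finset.sum_boole, Finset.sum_boole, Finset.sum_const, nsmul_eq_mul, mul_one]
  simp only [edgesWithin]
  ring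

lemma edgesWithin_univ (L : ℕ) (G : SimpleGraph (Fin L)) [DecidableRel G.Adj] :
    edgesWithin L G univ = G.edgeFinset.card := by
  unfold edgesWithin
  rw [Finset.filter_true_of_mem (fun e _ => by intro v _; exact Finset.mem_univ v)]

lemma sum_sigma_eq (L : ℕ) (σ : Fin L → ℝ) (hσ : ∀ v, σ v = 1 ∨ σ v = -1)
    (S : Finset (Fin L)) (hS : S = univ.filter fun v => σ v = 1) :
    ∑ v, σ v = 2 * (S.card : ℝ) - L := by
  classical
  have hsplit := Finset.sum_add_sum_compl S σ
  have h1 : ∑ v ∈ S, σ v = (S.card : ℝ) := by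
    rw [Finset.sum_congr rfl (g := fun _ => (1:ℝ))
      (fun v hv => by rw [hS] at hv; exact (Finset.mem_filter.1 hv).2)]
    simp
  have h2 : ∑ v ∈ Sᶜ, σ v = -((Sᶜ).card : ℝ) := by
    rw [Finset.sum_congr rfl (fun v hv => show σ v = -1 by
      rcases hσ v with h | h
      · exact absurd (by rw [hS]; simp [h]) (Finset.mem_compl.1 hv)
      · exact h)]
    rw [Finset.sum_const, nsmul_eq_mul, mul_neg_one]
  have hcard : ((Sᶜ).card : ℝ) = L - S.card := by
    rw [Finset.card_compl]
    have := Finset.card_le_univ S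
    push_cast [Nat.cast_sub this]
    simp
  rw [h1, h2, hcard] at hsplit
  linarith [hsplit]

set_option maxHeartbeats 1000000 in
/-- deterministic scalar form of Lemma S2: there are `C > 0` and `L₀`,
depending only on `p` and `c`, such that any graph `G` on `Fin L` (`L ≥ L₀`) whose edge
counts satisfy `|e_G(S) − p·|S|·(|S|−1)/2| ≤ c·L^{3/2}` for all `S` has a positive number
of edges `N_E`, and every `±1` configuration `σ` satisfies
`|(1/N_E)·Σ_{{v,v'}∈E} σ(v)σ(v') − (M(σ)/L)²| ≤ C·L^{−1/2}` where `M(σ) = Σ_v σ(v)`. -/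
theorem cut_regular_graph_energy (p c : ℝ) (hp0 : 0 < p) (hp1 : p ≤ 1) (hc : 0 < c) :
    ∃ C : ℝ, 0 < C ∧ ∃ L₀ : ℕ, ∀ L : ℕ, L₀ ≤ L →
      ∀ (G : SimpleGraph (Fin L)) [DecidableRel G.Adj],
        (∀ S : Finset (Fin L),
            |(edgesWithin L G S : ℝ) - p * (S.card : ℝ) * ((S.card : ℝ) - 1) / 2|
              ≤ c * (L : ℝ) ^ ((3 : ℝ) / 2)) →
        0 < G.edgeFinset.card ∧
          ∀ σ : Fin L → ℝ, (∀ v, σ v = 1 ∨ σ v = -1) →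
            |(1 / (G.edgeFinset.card : ℝ)) *
                ∑ e ∈ G.edgeFinset, Sym2.lift ⟨fun v w => σ v * σ w, fun _ _ => mul_comm _ _⟩ e
              - ((∑ v, σ v) / (L : ℝ)) ^ 2| ≤ C * (L : ℝ) ^ (-(1 : ℝ) / 2) := by
  classical
  refine ⟨8 * (6 * c + 1) / p, by positivity, ⌈(2 + 8 * c / p) ^ 2⌉₊, ?_⟩
  intro L hL G _ hreg
  set x : ℝ := Real.sqrt L with hxdef
  have hRpos : (0:ℝ) < 2 + 8 * c / p := by positivity
  have hLge : ((2 + 8 * c / p) ^ 2 : ℝ) ≤ (L : ℝ) :=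
    le_trans (Nat.le_ceil _) (Nat.cast_le.2 hL)
  have hxR : 2 + 8 * c / p ≤ x := by
    have := Real.sqrt_le_sqrt hLge
    rwa [Real.sqrt_sq hRpos.le] at this
  have hx2' : 2 ≤ x := le_trans (le_add_of_nonneg_right (by positivity)) hxR
  have hxpos : 0 < x := by linarith
  have hx2 : x ^ 2 = (L : ℝ) := Real.sq_sqrt (Nat.cast_nonneg L)
  have hxr : x = (L:ℝ) ^ ((1:ℝ)/2) := Real.sqrt_eq_rpow _
  have h32 : (L:ℝ) ^ ((3:ℝ)/2) = x ^ 3 := by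
    rw [hxr, ← Real.rpow_natCast ((L:ℝ) ^ ((1:ℝ)/2)) 3, ← Real.rpow_mul (Nat.cast_nonneg L)]
    norm_num
  have hm12 : (L:ℝ) ^ (-(1:ℝ)/2) = x⁻¹ := by
    rw [show (-(1:ℝ)/2) = -((1:ℝ)/2) by norm_num, Real.rpow_neg (Nat.cast_nonneg L), hxr]
  set N : ℝ := (G.edgeFinset.card : ℝ) with hNdef
  have hNreg : |N - p * x ^ 2 * (x ^ 2 - 1) / 2| ≤ c * x ^ 3 := by
    have h := hreg univ
    rw [h32, edgesWithin_univ, Finset.card_univ, Fintype.card_fin, ← hx2] at h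
    exact h
  have hd3 := abs_le.1 hNreg
  have h8c : 8 * c ≤ p * x := by
    have h : 8 * c / p ≤ x := by linarith
    calc 8 * c = p * (8 * c / p) := by field_simp
      _ ≤ p * x := mul_le_mul_of_nonneg_left h hp0.le
  have hx2sq : (2:ℝ) ≤ x ^ 2 := by linarith [sq_nonneg (x - 2), hx2']
  have hNlb : p * x ^ 4 / 8 ≤ N := by
    have hA : 8 * c * x ^ 3 ≤ p * x * x ^ 3 :=
      mul_le_mul_of_nonneg_right h8c (pow_nonneg hxpos.le 3)
    have hB : (0:ℝ) ≤ p * (x ^ 2 * (x ^ 2 - 2)) :=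
      mul_nonneg hp0.le (mul_nonneg (sq_nonneg x) (by linarith))
    linarith [hd3.1, hA, hB]
  have hNpos : 0 < N := lt_of_lt_of_le (by positivity) hNlb
  have hcard : 0 < G.edgeFinset.card := by
    have h' : (0:ℝ) < (G.edgeFinset.card : ℝ) := by rw [← hNdef]; exact hNpos
    exact_mod_cast h' 
  refine ⟨hcard, ?_⟩
  intro σ hσ
  set S : Finset (Fin L) := univ.filter (fun v => σ v = 1) with hSdef
  set a : ℝ := (S.card : ℝ) with hadef
  have ha0 : 0 ≤ a := Nat.cast_nonneg _
  have haL : a ≤ x ^ 2 := by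
    rw [hx2]
    have h := Finset.card_le_univ S
    rw [Fintype.card_fin] at h
    rw [hadef]
    exact_mod_cast h
  have hbcard : ((Sᶜ).card : ℝ) = x ^ 2 - a := by
    have h := Finset.card_le_univ S
    rw [Fintype.card_fin] at h
    rw [Finset.card_compl, Fintype.card_fin, Nat.cast_sub h, hx2]
  have hM : ∑ v, σ v = 2 * a - x ^ 2 := by
    rw [sum_sigma_eq L σ hσ S rfl, hx2]
  have hsum := sum_lift_eq L G σ hσ S rfl
  set e1 : ℝ := (edgesWithin L G S : ℝ) with he1
  set e2 : ℝ := (edgesWithin L G Sᶜ : ℝ) with he2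
  have h1 : |e1 - p * a * (a - 1) / 2| ≤ c * x ^ 3 := by
    have h := hreg S; rwa [h32] at h
  have h2 : |e2 - p * (x ^ 2 - a) * ((x ^ 2 - a) - 1) / 2| ≤ c * x ^ 3 := by
    have h := hreg Sᶜ; rwa [h32, hbcard] at h
  have hd1 := abs_le.1 h1
  have hd2 := abs_le.1 h2
  have hMsq : (2 * a - x ^ 2) ^ 2 ≤ x ^ 4 := by
    linarith [mul_nonneg ha0 (sub_nonneg.2 haL)]
  set u : ℝ := (2 * e1 - p * a * (a - 1) + (2 * e2 - p * (x ^ 2 - a) * ((x ^ 2 - a) - 1))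
      - (N - p * x ^ 2 * (x ^ 2 - 1) / 2)) * x ^ 4 with hu
  set v : ℝ := (2 * a - x ^ 2) ^ 2 * (N - p * x ^ 2 * (x ^ 2 - 1) / 2) with hv
  set w : ℝ := p * x ^ 2 * ((2 * a - x ^ 2) ^ 2 - x ^ 4) / 2 with hw
  have hid : (2 * (e1 + e2) - N) * x ^ 4 - (2 * a - x ^ 2) ^ 2 * N = u - v + w := by
    rw [hu, hv, hw]; ring
  have t1 : |u| ≤ 5 * c * x ^ 7 := by
    rw [hu, abs_mul, abs_of_nonneg (by positivity : (0:ℝ) ≤ x ^ 4)]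
    have habs : |2 * e1 - p * a * (a - 1) + (2 * e2 - p * (x ^ 2 - a) * ((x ^ 2 - a) - 1))
        - (N - p * x ^ 2 * (x ^ 2 - 1) / 2)| ≤ 5 * (c * x ^ 3) := by
      rw [abs_le]
      constructor <;> [linarith [hd1.1, hd2.1, hd3.2]; linarith [hd1.2, hd2.2, hd3.1]]
    calc _ ≤ 5 * (c * x ^ 3) * x ^ 4 :=
          mul_le_mul_of_nonneg_right habs (by positivity)
      _ = 5 * c * x ^ 7 := by ring
  have t2 : |v| ≤ c * x ^ 7 := by
    rw [hv, abs_mul, abs_of_nonneg (sq_nonneg _)]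
    calc _ ≤ x ^ 4 * (c * x ^ 3) :=
          mul_le_mul hMsq hNreg (abs_nonneg _) (by positivity)
      _ = c * x ^ 7 := by ring
  have t3 : |w| ≤ x ^ 7 := by
    have hA : (0:ℝ) ≤ p * (x ^ 2 * (x ^ 4 - (2 * a - x ^ 2) ^ 2)) :=
      mul_nonneg hp0.le (mul_nonneg (sq_nonneg x) (sub_nonneg.2 hMsq))
    have hB : (0:ℝ) ≤ p * (x ^ 2 * (2 * a - x ^ 2) ^ 2) :=
      mul_nonneg hp0.le (mul_nonneg (sq_nonneg x) (sq_nonneg _))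
    have hC : (0:ℝ) ≤ (1 - p) * x ^ 6 :=
      mul_nonneg (sub_nonneg.2 hp1) (pow_nonneg hxpos.le 6)
    have hD : (0:ℝ) ≤ (x - 1) * x ^ 6 :=
      mul_nonneg (by linarith) (pow_nonneg hxpos.le 6)
    rw [hw, abs_le]
    constructor <;> linarith [hA, hB, hC, hD, pow_nonneg hxpos.le 7, pow_nonneg hxpos.le 6]
  have key : |(2 * (e1 + e2) - N) * x ^ 4 - (2 * a - x ^ 2) ^ 2 * N| ≤ (6 * c + 1) * x ^ 7 := by
    rw [hid]
    calc |u - v + w| ≤ |u - v| + |w| := abs_add_le _ _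
      _ ≤ |u| + |v| + |w| := by linarith [abs_sub u v]
      _ ≤ 5 * c * x ^ 7 + c * x ^ 7 + x ^ 7 := by linarith
      _ = (6 * c + 1) * x ^ 7 := by ring
  rw [hsum, hM, hm12, ← hx2]
  have heq : 1 / N * (2 * (e1 + e2) - N) - ((2 * a - x ^ 2) / x ^ 2) ^ 2
      = ((2 * (e1 + e2) - N) * x ^ 4 - (2 * a - x ^ 2) ^ 2 * N) / (N * x ^ 4) := by
    field_simp
  rw [heq, abs_div, abs_of_pos (by positivity : (0:ℝ) < N * x ^ 4)]
  have hstep : |(2 * (e1 + e2) - N) * x ^ 4 - (2 * a - x ^ 2) ^ 2 * N| / (N * x ^ 4)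
      ≤ ((6 * c + 1) * x ^ 7) / ((p * x ^ 4 / 8) * x ^ 4) := by
    apply div_le_div₀ (by positivity) key (by positivity)
    have := mul_le_mul_of_nonneg_right hNlb (pow_nonneg hxpos.le 4)
    linarith
  refine le_trans hstep (le_of_eq ?_)
  field_simp
end

section
/- Let c > 0 and p₁, p₂ ∈ [0,1]. Let L ≥ 1 and let Fin L be partitioned into disjoint sets A and B with |A| = a and |B| = b = L − a. Let G be a simple graph on Fin L satisfying, for every subset S ⊆ Fin L, |e_G(S) − (p₁·(binom(|S∩A|,2) + binom(|S∩B|,2)) + p₂·|S∩A|·|S∩B|)| ≤ c·L^{3/2}. Then for every σ : Fin L → {−1,1}, |Σ_{{v,v'} ∈ E} σ(v)·σ(v') − (p₁·(M_A² − a)/2 + p₁·(M_B² − b)/2 + p₂·M_A·M_B)| ≤ 6·c·L^{3/2}, where M_A = Σ_{v ∈ A} σ(v) and M_B = Σ_{v ∈ B} σ(v). -/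
open Finset

/-- deterministic scalar form of Lemma S5: let `Fin L` be partitioned
into `A` and `B`, and let `G` satisfy, for every `S`,
`|e_G(S) − (p₁(binom(|S∩A|,2) + binom(|S∩B|,2)) + p₂|S∩A||S∩B|)| ≤ c·L^{3/2}`.
Then for every `±1` configuration `σ`, the edge sum `Σ_{{v,v'}∈E} σ(v)σ(v')` equals
`p₁(M_A² − |A|)/2 + p₁(M_B² − |B|)/2 + p₂·M_A·M_B` up to `6·c·L^{3/2}`, where
`M_A, M_B` are the partial magnetisations. -/
theorem nontrivial_cut_graph_energy (c p₁ p₂ : ℝ) (hc : 0 < c)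
    (hp₁ : p₁ ∈ Set.Icc (0 : ℝ) 1) (hp₂ : p₂ ∈ Set.Icc (0 : ℝ) 1)
    (L : ℕ) (hL : 1 ≤ L) (A B : Finset (Fin L))
    (hdisj : Disjoint A B) (hcover : A ∪ B = Finset.univ)
    (G : SimpleGraph (Fin L)) [DecidableRel G.Adj]
    (hreg : ∀ S : Finset (Fin L),
      |(edgesWithin L G S : ℝ)
          - (p₁ * (((S ∩ A).card.choose 2 : ℝ) + ((S ∩ B).card.choose 2 : ℝ))
              + p₂ * ((S ∩ A).card : ℝ) * ((S ∩ B).card : ℝ))|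
        ≤ c * (L : ℝ) ^ ((3 : ℝ) / 2)) :
    ∀ σ : Fin L → ℝ, (∀ v, σ v = 1 ∨ σ v = -1) →
      |(∑ e ∈ G.edgeFinset, Sym2.lift ⟨fun v w => σ v * σ w, fun _ _ => mul_comm _ _⟩ e)
          - (p₁ * ((∑ v ∈ A, σ v) ^ 2 - (A.card : ℝ)) / 2
              + p₁ * ((∑ v ∈ B, σ v) ^ 2 - (B.card : ℝ)) / 2
              + p₂ * (∑ v ∈ A, σ v) * (∑ v ∈ B, σ v))|
        ≤ 6 * c * (L : ℝ) ^ ((3 : ℝ) / 2) := by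
  intro σ hσ
  classical
  set P : Finset (Fin L) := Finset.univ.filter (fun v => σ v = 1) with hPdef
  set N : Finset (Fin L) := Finset.univ.filter (fun v => σ v = -1) with hNdef
  have hmemP : ∀ v, v ∈ P ↔ σ v = 1 := by intro v; simp [hPdef]
  have hmemN : ∀ v, v ∈ N ↔ σ v = -1 := by intro v; simp [hNdef]
  have hPN : Disjoint P N := by
    rw [Finset.disjoint_left]
    intro v hv hv'
    rw [hmemP] at hv; rw [hmemN] at hv'
    rw [hv] at hv'; norm_num at hv'
  have hPNu : P ∪ N = Finset.univ := by
    ext v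
    simp only [Finset.mem_union, hmemP, hmemN, Finset.mem_univ, iff_true]
    exact hσ v
  -- cast edgesWithin to a sum of indicators
  have hcast : ∀ S : Finset (Fin L), (edgesWithin L G S : ℝ)
      = ∑ e ∈ G.edgeFinset, if (∀ v ∈ e, v ∈ S) then (1 : ℝ) else 0 := by
    intro S
    rw [edgesWithin, Finset.card_filter]
    push_cast
    rfl
  -- the edge sum identity
  have hsum : (∑ e ∈ G.edgeFinset, Sym2.lift ⟨fun v w => σ v * σ w, fun _ _ => mul_comm _ _⟩ e)
      = 2 * (edgesWithin L G P : ℝ) + 2 * (edgesWithin L G N : ℝ)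
        - (edgesWithin L G Finset.univ : ℝ) := by
    rw [hcast, hcast, hcast, Finset.mul_sum, Finset.mul_sum,
      ← Finset.sum_add_distrib, ← Finset.sum_sub_distrib]
    refine Finset.sum_congr rfl ?_
    intro e _
    induction e using Sym2.inductionOn with
    | hf v w =>
      have hcondP : (∀ u ∈ s(v, w), u ∈ P) ↔ (v ∈ P ∧ w ∈ P) := by
        simp [Sym2.mem_iff]
      have hcondN : (∀ u ∈ s(v, w), u ∈ N) ↔ (v ∈ N ∧ w ∈ N) := by
        simp [Sym2.mem_iff]
      have hcondU : (∀ u ∈ s(v, w), u ∈ (Finset.univ : Finset (Fin L))) := by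
        intro u _; exact Finset.mem_univ u
      rw [if_pos hcondU]
      rcases hσ v with hv | hv <;> rcases hσ w with hw | hw <;>
        simp [Sym2.lift_mk, hcondP, hcondN, hmemP, hmemN, hv, hw] <;> norm_num
  -- counting identities for a set C
  have key : ∀ C : Finset (Fin L),
      (((P ∩ C).card : ℝ) + ((N ∩ C).card : ℝ) = (C.card : ℝ)) ∧
      (∑ v ∈ C, σ v = ((P ∩ C).card : ℝ) - ((N ∩ C).card : ℝ)) := by
    intro C
    have hdisjC : Disjoint (P ∩ C) (N ∩ C) :=
      hPN.mono (Finset.inter_subset_left) (Finset.inter_subset_left)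
    have hunionC : (P ∩ C) ∪ (N ∩ C) = C := by
      rw [← Finset.union_inter_distrib_right, hPNu, Finset.univ_inter]
    constructor
    · rw [← Nat.cast_add, ← Finset.card_union_of_disjoint hdisjC, hunionC]
    · have hs : ∑ v ∈ C, σ v = ∑ v ∈ P ∩ C, σ v + ∑ v ∈ N ∩ C, σ v := by
        rw [← Finset.sum_union hdisjC, hunionC]
      rw [hs]
      have h1 : ∑ v ∈ P ∩ C, σ v = ((P ∩ C).card : ℝ) := by
        rw [Finset.sum_congr rfl (fun v hv => (hmemP v).mp (Finset.mem_inter.mp hv).1)]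
        simp
      have h2 : ∑ v ∈ N ∩ C, σ v = -((N ∩ C).card : ℝ) := by
        rw [Finset.sum_congr rfl (fun v hv => (hmemN v).mp (Finset.mem_inter.mp hv).1)]
        simp
      rw [h1, h2]; ring
  obtain ⟨haA, hMA⟩ := key A
  obtain ⟨haB, hMB⟩ := key B
  -- the target identity
  have hchoose : ∀ n : ℕ, ((n.choose 2 : ℕ) : ℝ) = (n : ℝ) * ((n : ℝ) - 1) / 2 := by
    intro n; exact Nat.cast_choose_two ℝ n
  have hT : (p₁ * ((∑ v ∈ A, σ v) ^ 2 - (A.card : ℝ)) / 2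
              + p₁ * ((∑ v ∈ B, σ v) ^ 2 - (B.card : ℝ)) / 2
              + p₂ * (∑ v ∈ A, σ v) * (∑ v ∈ B, σ v))
      = 2 * (p₁ * (((P ∩ A).card.choose 2 : ℝ) + ((P ∩ B).card.choose 2 : ℝ))
              + p₂ * ((P ∩ A).card : ℝ) * ((P ∩ B).card : ℝ))
        + 2 * (p₁ * (((N ∩ A).card.choose 2 : ℝ) + ((N ∩ B).card.choose 2 : ℝ))
              + p₂ * ((N ∩ A).card : ℝ) * ((N ∩ B).card : ℝ))
        - (p₁ * ((A.card.choose 2 : ℝ) + (B.card.choose 2 : ℝ))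
              + p₂ * (A.card : ℝ) * (B.card : ℝ)) := by
    rw [hMA, hMB, hchoose, hchoose, hchoose, hchoose, hchoose, hchoose,
      ← haA, ← haB]
    ring
  have h1 := hreg P
  have h2 := hreg N
  have h3 := hreg Finset.univ
  simp only [Finset.univ_inter] at h3
  have hnn : 0 ≤ c * (L : ℝ) ^ ((3 : ℝ) / 2) :=
    mul_nonneg hc.le (Real.rpow_nonneg (Nat.cast_nonneg L) _)
  rw [hsum, hT]
  rw [abs_le] at h1 h2 h3 ⊢
  constructor <;> [linarith [h1.1, h2.1, h3.2]; linarith [h1.2, h2.2, h3.1]]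
end
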